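/- For the grid model of a balanced adaptive tree: if a leaf L at level ℓ has a fine neighbor B (a box at level ℓ+1 adjacent to L), then the parent of B is a same-level neighbor of L; equivalently, every fine neighbor of L is a child of some colleague neighbor of L. Consequently L has at most (3^d − 1)·2^d fine neighbors. -/
import Mathlib


open Set

/-- Closure in `ℝ^d` of the dyadic cube at level `ℓ` with index `x`. -/
def dyadicCl (d ℓ : ℕ) (x : Fin d → ℕ) : Set (Fin d → ℝ) :=
  {p | ∀ i, (x i : ℝ) / 2 ^ ℓ ≤ p i ∧ p i ≤ ((x i : ℝ) + 1) / 2 ^ ℓ}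

lemma dyadicCl_subset_parent (d ℓ : ℕ) (y : Fin d → ℕ) :
    dyadicCl d (ℓ + 1) y ⊆ dyadicCl d ℓ (fun i => y i / 2) := by
  intro p hp i
  obtain ⟨h1, h2⟩ := hp i
  have hpos : (0:ℝ) < 2 ^ ℓ := by positivity
  have hpos' : (0:ℝ) < 2 ^ (ℓ+1) := by positivity
  have hc1 : y i / 2 * 2 ≤ y i := Nat.div_mul_le_self _ _
  have hc2 : y i + 1 ≤ 2 * (y i / 2) + 2 := by omega
  constructor
  · refine le_trans ?_ h1
    rw [div_le_div_iff₀ hpos hpos']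
    have : ((y i / 2 : ℕ) : ℝ) * 2 ≤ (y i : ℝ) := by exact_mod_cast hc1
    calc ((y i / 2 : ℕ) : ℝ) * 2 ^ (ℓ+1) = (((y i / 2 : ℕ) : ℝ) * 2) * 2 ^ ℓ := by
          rw [pow_succ]; ring
      _ ≤ (y i : ℝ) * 2 ^ ℓ := by nlinarith
  · refine le_trans h2 ?_
    rw [div_le_div_iff₀ hpos' hpos]
    have : ((y i : ℝ) + 1) ≤ (((y i / 2 : ℕ) : ℝ) + 1) * 2 := by
      have : ((y i : ℕ) : ℝ) + 1 ≤ ((2 * (y i / 2) + 2 : ℕ) : ℝ) := by exact_mod_cast hc2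
      push_cast at this ⊢
      linarith
    calc ((y i : ℝ) + 1) * 2 ^ ℓ ≤ ((((y i / 2 : ℕ) : ℝ) + 1) * 2) * 2 ^ ℓ := by nlinarith
      _ = (((y i / 2 : ℕ) : ℝ) + 1) * 2 ^ (ℓ+1) := by rw [pow_succ]; ring

lemma adj_bounds (d ℓ : ℕ) (x y : Fin d → ℕ)
    (h : (dyadicCl d (ℓ + 1) y ∩ dyadicCl d ℓ x).Nonempty) :
    ∀ i, 2 * x i ≤ y i + 1 ∧ y i ≤ 2 * x i + 2 := by
  obtain ⟨p, hpy, hpx⟩ := h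
  intro i
  obtain ⟨h1, h2⟩ := hpy i
  obtain ⟨h3, h4⟩ := hpx i
  have hpos : (0:ℝ) < 2 ^ ℓ := by positivity
  have hpos' : (0:ℝ) < 2 ^ (ℓ+1) := by positivity
  have hy : (y i : ℝ) / 2 ^ (ℓ+1) ≤ ((x i : ℝ) + 1) / 2 ^ ℓ := le_trans h1 h4
  have hx : (x i : ℝ) / 2 ^ ℓ ≤ ((y i : ℝ) + 1) / 2 ^ (ℓ+1) := le_trans h3 h2
  rw [div_le_div_iff₀ hpos' hpos] at hy
  rw [div_le_div_iff₀ hpos hpos'] at hx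
  rw [pow_succ] at hy hx
  constructor
  · have : (2 * x i : ℝ) ≤ (y i : ℝ) + 1 := by nlinarith
    exact_mod_cast this
  · have : (y i : ℝ) ≤ 2 * x i + 2 := by nlinarith
    exact_mod_cast this

/-- **Fine neighbors are children of colleague neighbors.**
In the grid model of a balanced adaptive tree, let `L` be a leaf at level `ℓ`
indexed by `x` (so `x i < 2^ℓ`).  A fine neighbor of `L` is a level-`(ℓ+1)` box `y`
adjacent to `L` (their closures intersect) that is not a descendant (child) of `L`,
i.e. `⌊y/2⌋ ≠ x`.  Then the parent `⌊y/2⌋` of any fine neighbor is a same-level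
neighbor (colleague) of `L` distinct from `L`; consequently `L` has at most
`(3^d - 1) * 2^d` fine neighbors. -/
theorem fine_neighbors_are_children_of_colleagues
    (d ℓ : ℕ) (x : Fin d → ℕ) (hx : ∀ i, x i < 2 ^ ℓ) :
    (∀ y : Fin d → ℕ, (∀ i, y i < 2 ^ (ℓ + 1)) →
      (dyadicCl d (ℓ + 1) y ∩ dyadicCl d ℓ x).Nonempty →
      (fun i => y i / 2) ≠ x →
      ((dyadicCl d ℓ (fun i => y i / 2) ∩ dyadicCl d ℓ x).Nonempty ∧
        (fun i => y i / 2) ≠ x)) ∧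
    ({y : Fin d → ℕ | (∀ i, y i < 2 ^ (ℓ + 1)) ∧
        (dyadicCl d (ℓ + 1) y ∩ dyadicCl d ℓ x).Nonempty ∧
        (fun i => y i / 2) ≠ x}).ncard ≤ (3 ^ d - 1) * 2 ^ d := by
  classical
  constructor
  · intro y hy hne hpar
    refine ⟨?_, hpar⟩
    obtain ⟨p, hp1, hp2⟩ := hne
    exact ⟨p, dyadicCl_subset_parent d ℓ y hp1, hp2⟩
  · set S := {y : Fin d → ℕ | (∀ i, y i < 2 ^ (ℓ + 1)) ∧
        (dyadicCl d (ℓ + 1) y ∩ dyadicCl d ℓ x).Nonempty ∧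
        (fun i => y i / 2) ≠ x} with hS
    set c : Fin d → Fin 3 := fun _ => 1 with hc
    set f : (Fin d → ℕ) → (Fin d → Fin 3) × (Fin d → Fin 2) :=
      fun y => (fun i => ⟨(y i / 2 + 1 - x i) % 3, Nat.mod_lt _ (by norm_num)⟩,
                fun i => ⟨y i % 2, Nat.mod_lt _ (by norm_num)⟩) with hf
    have key : ∀ y ∈ S, ∀ i, 2 * x i ≤ y i + 1 ∧ y i ≤ 2 * x i + 2 := by
      intro y hyS
      exact adj_bounds d ℓ x y hyS.2.1
    have hinj : Set.InjOn f S := by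
      intro y1 h1 y2 h2 heq
      funext i
      have k1 := key y1 h1 i
      have k2 := key y2 h2 i
      have e1 : (y1 i / 2 + 1 - x i) % 3 = (y2 i / 2 + 1 - x i) % 3 := by
        have := congrFun (congrArg Prod.fst heq) i
        exact Fin.mk.inj_iff.mp this
      have e2 : y1 i % 2 = y2 i % 2 := by
        have := congrFun (congrArg Prod.snd heq) i
        exact Fin.mk.inj_iff.mp this
      omega
    have himg : f '' S ⊆ {q : (Fin d → Fin 3) × (Fin d → Fin 2) | q.1 ≠ c} := by
      rintro _ ⟨y, hyS, rfl⟩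
      intro hqc
      apply hyS.2.2
      funext i
      have k := key y hyS i
      have : ((y i / 2 + 1 - x i) % 3 : ℕ) = 1 := by
        have := congrFun hqc i
        simpa [hc] using Fin.mk.inj_iff.mp this
      omega
    set F : Finset ((Fin d → Fin 3) × (Fin d → Fin 2)) :=
      Finset.univ.filter (fun q => q.1 ≠ c) with hF
    have himgF : f '' S ⊆ ↑F := by
      intro q hq
      simp only [hF, Finset.coe_filter, Finset.mem_univ, true_and, Set.mem_setOf_eq]
      exact himg hq
    have hcard : F.card = (3 ^ d - 1) * 2 ^ d := by
      have hsplit := Finset.card_filter_add_card_filter_not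
        (s := (Finset.univ : Finset ((Fin d → Fin 3) × (Fin d → Fin 2))))
        (p := fun q => q.1 = c)
      have heqf : Finset.univ.filter (fun q : (Fin d → Fin 3) × (Fin d → Fin 2) => q.1 = c)
          = {c} ×ˢ Finset.univ := by
        ext ⟨a, b⟩
        simp [Prod.ext_iff, eq_comm]
      have hcardeq : (Finset.univ.filter
          (fun q : (Fin d → Fin 3) × (Fin d → Fin 2) => q.1 = c)).card = 2 ^ d := by
        rw [heqf, Finset.card_product]
        simp
      have htot : (Finset.univ : Finset ((Fin d → Fin 3) × (Fin d → Fin 2))).card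
          = 3 ^ d * 2 ^ d := by
        simp [Fintype.card_prod]
      have hFcard : F.card = 3 ^ d * 2 ^ d - 2 ^ d := by
        have : (Finset.univ.filter
            (fun q : (Fin d → Fin 3) × (Fin d → Fin 2) => ¬ q.1 = c)).card
            = 3 ^ d * 2 ^ d - 2 ^ d := by omega
        simpa [hF] using this
      rw [hFcard, Nat.sub_mul, one_mul]
    calc S.ncard = (f '' S).ncard := (Set.ncard_image_of_injOn hinj).symm
      _ ≤ (↑F : Set _).ncard := Set.ncard_le_ncard himgF F.finite_toSet
      _ = F.card := Set.ncard_coe_finset F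
      _ = (3 ^ d - 1) * 2 ^ d := hcard
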